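/- arXiv:2101.03528 — 4 statements merged into one kernel-verified Lean document; each statement's English description precedes it below -/
import Mathlib

section
/- Each logic which enjoys the κ-ary global (respectively local, parametrized local) deduction–detachment theorem and has an antitheorem (in the parametrized local case, an antitheorem of cardinality at most |Var|) also enjoys the κ-ary global (respectively local, parametrized local) inconsistency lemma. -/
set_option linter.unusedVariables false

open FirstOrder Set

universe u

/-- Substitution composition for terms of a first-order language. -/
theorem FirstOrder.Language.Term.subst_subst' {L : FirstOrder.Language.{u, u}} {α β γ : Type u}
    (t : L.Term α) (f : α → L.Term β) (g : β → L.Term γ) :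
    (t.subst f).subst g = t.subst (fun i => (f i).subst g) := by
  induction t with
  | var => rfl
  | func f ts ih => simp only [Language.Term.subst, ih]

/-- A logic over the absolutely free algebra of `L`-terms in variables `Var`. -/
structure Logic (L : FirstOrder.Language.{u, u}) (Var : Type u) where
  Deriv : Set (L.Term Var) → L.Term Var → Prop
  deriv_refl : ∀ φ : L.Term Var, Deriv {φ} φ
  deriv_mono : ∀ {Γ Δ : Set (L.Term Var)} {φ : L.Term Var}, Deriv Γ φ → Γ ⊆ Δ → Deriv Δ φ
  deriv_cut : ∀ {Γ Φ : Set (L.Term Var)} {φ : L.Term Var},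
      (∀ ψ ∈ Φ, Deriv Γ ψ) → Deriv Φ φ → Deriv Γ φ
  deriv_subst : ∀ {Γ : Set (L.Term Var)} {φ : L.Term Var} (σ : Var → L.Term Var),
      Deriv Γ φ → Deriv ((fun t => t.subst σ) '' Γ) (φ.subst σ)

namespace Logic

variable {L : FirstOrder.Language.{u, u}} {Var : Type u} (Lg : Logic L Var)

/-- `Γ ⊢ φ` for every `φ ∈ Δ`. -/
def DerivAll (Γ Δ : Set (L.Term Var)) : Prop := ∀ φ ∈ Δ, Lg.Deriv Γ φ

/-- `Γ ⊢ Fm`, i.e. `Γ` derives every formula. -/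
def Inc (Γ : Set (L.Term Var)) : Prop := ∀ φ : L.Term Var, Lg.Deriv Γ φ

/-- A theory of the logic: a deductively closed set of formulas. -/
def IsTheory (T : Set (L.Term Var)) : Prop := ∀ φ : L.Term Var, Lg.Deriv T φ → φ ∈ T

/-- A simple theory: a maximal non-trivial theory. -/
def IsSimple (T : Set (L.Term Var)) : Prop :=
  Lg.IsTheory T ∧ T ≠ univ ∧
    ∀ T' : Set (L.Term Var), Lg.IsTheory T' → T' ≠ univ → T ⊆ T' → T' = T

/-- A semisimple theory: an intersection of simple theories. -/
def IsSemisimple (T : Set (L.Term Var)) : Prop :=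
  ∃ S : Set (Set (L.Term Var)), (∀ U ∈ S, Lg.IsSimple U) ∧ T = ⋂₀ S

/-- A semisimple logic: every theory is an intersection of simple theories. -/
def Semisimple : Prop := ∀ T : Set (L.Term Var), Lg.IsTheory T → Lg.IsSemisimple T

/-- A coatomic logic: every non-trivial theory extends to a simple theory. -/
def Coatomic : Prop :=
  ∀ T : Set (L.Term Var), Lg.IsTheory T → T ≠ univ → ∃ U, Lg.IsSimple U ∧ T ⊆ U

/-- A matrix `⟨A, F⟩` is a model of the logic if the preimage of `F` under any
homomorphism (equivalently, the realization along any valuation) is a theory. -/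
def IsModel (A : Type u) [L.Structure A] (F : Set A) : Prop :=
  ∀ v : Var → A, Lg.IsTheory {φ : L.Term Var | φ.realize v ∈ F}

/-- `Γ ⊢ ∅`: `Γ` cannot be jointly designated in any non-trivial model. -/
def Antitheorem (Γ : Set (L.Term Var)) : Prop :=
  ∀ (A : Type u) [L.Structure A], ∀ F : Set A, Lg.IsModel A F → F ≠ univ →
    ∀ v : Var → A, ¬((fun φ : L.Term Var => φ.realize v) '' Γ ⊆ F)

/-- κ-compactness: every inconsistent set has an inconsistent subset of size `< κ`. -/
def Compact (κ : Cardinal.{u}) : Prop :=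
  ∀ Γ : Set (L.Term Var), Lg.Inc Γ → ∃ Γ' ⊆ Γ, Cardinal.mk ↥Γ' < κ ∧ Lg.Inc Γ'

/-- κ-arity: any derivation uses fewer than κ premises. -/
def Ary (κ : Cardinal.{u}) : Prop :=
  ∀ (Γ : Set (L.Term Var)) (φ : L.Term Var), Lg.Deriv Γ φ →
    ∃ Γ' ⊆ Γ, Cardinal.mk ↥Γ' < κ ∧ Lg.Deriv Γ' φ

end Logic

/-- A parametrized family: for each ordinal `α`, a family of sets of formulas in
`α`-many variable slots together with parameter slots (indexed by `Var`). -/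
abbrev PFam (L : FirstOrder.Language.{u, u}) (Var : Type u) : Type (u + 1) :=
  ∀ α : Ordinal.{u}, Set (Set (L.Term (α.ToType ⊕ Var)))

/-- A local (parameter-free) family. -/
abbrev LFam (L : FirstOrder.Language.{u, u}) (Var : Type u) : Type (u + 1) :=
  ∀ α : Ordinal.{u}, Set (Set (L.Term α.ToType))

/-- A global family: a single set of formulas for each ordinal `α`. -/
abbrev GFam (L : FirstOrder.Language.{u, u}) (Var : Type u) : Type (u + 1) :=
  ∀ α : Ordinal.{u}, Set (L.Term α.ToType)

namespace Logic

variable {L : FirstOrder.Language.{u, u}} {Var : Type u}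

/-- `I(φ̄, π̄)`: instantiation of a parametrized set of formulas. -/
def pInst {α : Ordinal.{u}} (I : Set (L.Term (α.ToType ⊕ Var)))
    (phis : α.ToType → L.Term Var) (pis : Var → L.Term Var) : Set (L.Term Var) :=
  (fun t => t.subst (Sum.elim phis pis)) '' I

/-- `I(φ̄)`: instantiation of a parameter-free set of formulas. -/
def lInst {α : Ordinal.{u}} (I : Set (L.Term α.ToType))
    (phis : α.ToType → L.Term Var) : Set (L.Term Var) :=
  (fun t => t.subst phis) '' I

variable (Lg : Logic L Var)

/-- The κ-ary parametrized local inconsistency lemma w.r.t. the family `Ψ`. -/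
def ParamLocalIL (κ : Cardinal.{u}) (Ψ : PFam L Var) : Prop :=
  ∀ α : Ordinal.{u}, 0 < α → α < κ.ord →
    ∀ (Γ : Set (L.Term Var)) (phis : α.ToType → L.Term Var),
      Lg.Inc (Γ ∪ range phis) ↔
        ∃ I ∈ Ψ α, ∃ pis : Var → L.Term Var, Lg.DerivAll Γ (pInst I phis pis)

/-- The κ-ary local inconsistency lemma w.r.t. the family `Ψ`. -/
def LocalIL (κ : Cardinal.{u}) (Ψ : LFam L Var) : Prop :=
  ∀ α : Ordinal.{u}, 0 < α → α < κ.ord →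
    ∀ (Γ : Set (L.Term Var)) (phis : α.ToType → L.Term Var),
      Lg.Inc (Γ ∪ range phis) ↔ ∃ I ∈ Ψ α, Lg.DerivAll Γ (lInst I phis)

/-- The κ-ary global inconsistency lemma w.r.t. the family `Ψ`. -/
def GlobalIL (κ : Cardinal.{u}) (Ψ : GFam L Var) : Prop :=
  Lg.LocalIL κ (fun α => {Ψ α})

/-- The κ-ary dual parametrized local inconsistency lemma w.r.t. the family `Ψ`. -/
def DualParamLocalIL (κ : Cardinal.{u}) (Ψ : PFam L Var) : Prop :=
  ∀ α : Ordinal.{u}, 0 < α → α < κ.ord →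
    ∀ (Γ : Set (L.Term Var)) (phis : α.ToType → L.Term Var),
      (∀ i, Lg.Deriv Γ (phis i)) ↔
        ∀ I ∈ Ψ α, ∀ pis : Var → L.Term Var, Lg.Inc (Γ ∪ pInst I phis pis)

/-- The κ-ary dual local inconsistency lemma w.r.t. the family `Ψ`. -/
def DualLocalIL (κ : Cardinal.{u}) (Ψ : LFam L Var) : Prop :=
  ∀ α : Ordinal.{u}, 0 < α → α < κ.ord →
    ∀ (Γ : Set (L.Term Var)) (phis : α.ToType → L.Term Var),
      (∀ i, Lg.Deriv Γ (phis i)) ↔ ∀ I ∈ Ψ α, Lg.Inc (Γ ∪ lInst I phis)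

/-- The κ-ary dual global inconsistency lemma w.r.t. the family `Ψ`. -/
def DualGlobalIL (κ : Cardinal.{u}) (Ψ : GFam L Var) : Prop :=
  Lg.DualLocalIL κ (fun α => {Ψ α})

/-- The κ-ary classical parametrized local IL: both the ordinary and dual IL. -/
def ClassicalParamLocalIL (κ : Cardinal.{u}) (Ψ : PFam L Var) : Prop :=
  Lg.ParamLocalIL κ Ψ ∧ Lg.DualParamLocalIL κ Ψ

/-- The κ-ary classical local IL: both the ordinary and dual IL. -/
def ClassicalLocalIL (κ : Cardinal.{u}) (Ψ : LFam L Var) : Prop :=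
  Lg.LocalIL κ Ψ ∧ Lg.DualLocalIL κ Ψ

/-- The κ-ary classical global IL: both the ordinary and dual IL. -/
def ClassicalGlobalIL (κ : Cardinal.{u}) (Ψ : GFam L Var) : Prop :=
  Lg.GlobalIL κ Ψ ∧ Lg.DualGlobalIL κ Ψ

/-- The κ-ary parametrized local law of the excluded middle w.r.t. `Ψ`. -/
def ParamLocalLEM (κ : Cardinal.{u}) (Ψ : PFam L Var) : Prop :=
  (∀ α : Ordinal.{u}, 0 < α → α < κ.ord → ∀ I ∈ Ψ α,
    ∀ (phis : α.ToType → L.Term Var) (pis : Var → L.Term Var),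
      Lg.Inc (range phis ∪ pInst I phis pis)) ∧
  (∀ α : Ordinal.{u}, 0 < α → α < κ.ord →
    ∀ (Γ : Set (L.Term Var)) (phis : α.ToType → L.Term Var) (ψ : L.Term Var),
      Lg.Deriv (Γ ∪ range phis) ψ →
      (∀ I ∈ Ψ α, ∀ pis : Var → L.Term Var, Lg.Deriv (Γ ∪ pInst I phis pis) ψ) →
      Lg.Deriv Γ ψ)

/-- The κ-ary local law of the excluded middle w.r.t. `Ψ`. -/
def LocalLEM (κ : Cardinal.{u}) (Ψ : LFam L Var) : Prop :=
  (∀ α : Ordinal.{u}, 0 < α → α < κ.ord → ∀ I ∈ Ψ α,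
    ∀ phis : α.ToType → L.Term Var, Lg.Inc (range phis ∪ lInst I phis)) ∧
  (∀ α : Ordinal.{u}, 0 < α → α < κ.ord →
    ∀ (Γ : Set (L.Term Var)) (phis : α.ToType → L.Term Var) (ψ : L.Term Var),
      Lg.Deriv (Γ ∪ range phis) ψ →
      (∀ I ∈ Ψ α, Lg.Deriv (Γ ∪ lInst I phis) ψ) → Lg.Deriv Γ ψ)

/-- The κ-ary simple parametrized local IL w.r.t. `Ψ`. -/
def SimpleParamLocalIL (κ : Cardinal.{u}) (Ψ : PFam L Var) : Prop :=
  (∀ α : Ordinal.{u}, 0 < α → α < κ.ord → ∀ I ∈ Ψ α,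
    ∀ (phis : α.ToType → L.Term Var) (pis : Var → L.Term Var),
      Lg.Inc (range phis ∪ pInst I phis pis)) ∧
  (∀ α : Ordinal.{u}, 0 < α → α < κ.ord →
    ∀ T : Set (L.Term Var), Lg.IsSimple T → ∀ phis : α.ToType → L.Term Var,
      Lg.Inc (T ∪ range phis) →
        ∃ I ∈ Ψ α, ∃ pis : Var → L.Term Var, Lg.DerivAll T (pInst I phis pis))

/-- The κ-ary simple local IL w.r.t. `Ψ`. -/
def SimpleLocalIL (κ : Cardinal.{u}) (Ψ : LFam L Var) : Prop :=
  (∀ α : Ordinal.{u}, 0 < α → α < κ.ord → ∀ I ∈ Ψ α,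
    ∀ phis : α.ToType → L.Term Var, Lg.Inc (range phis ∪ lInst I phis)) ∧
  (∀ α : Ordinal.{u}, 0 < α → α < κ.ord →
    ∀ T : Set (L.Term Var), Lg.IsSimple T → ∀ phis : α.ToType → L.Term Var,
      Lg.Inc (T ∪ range phis) → ∃ I ∈ Ψ α, Lg.DerivAll T (lInst I phis))

end Logic

/-- Family for the parametrized local DDT: sets of formulas `I(p̄, q, r̄)`. -/
abbrev PFamD (L : FirstOrder.Language.{u, u}) (Var : Type u) : Type (u + 1) :=
  ∀ α : Ordinal.{u}, Set (Set (L.Term (α.ToType ⊕ (PUnit.{u + 1} ⊕ Var))))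

/-- Family for the local DDT: sets of formulas `I(p̄, q)`. -/
abbrev LFamD (L : FirstOrder.Language.{u, u}) (Var : Type u) : Type (u + 1) :=
  ∀ α : Ordinal.{u}, Set (Set (L.Term (α.ToType ⊕ PUnit.{u + 1})))

/-- Family for the global DDT: a single set `I(p̄, q)` for each `α`. -/
abbrev GFamD (L : FirstOrder.Language.{u, u}) (Var : Type u) : Type (u + 1) :=
  ∀ α : Ordinal.{u}, Set (L.Term (α.ToType ⊕ PUnit.{u + 1}))

namespace Logic

variable {L : FirstOrder.Language.{u, u}} {Var : Type u}

/-- `I(φ̄, ψ)`: instantiation of a DDT set of formulas. -/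
def dInst {α : Ordinal.{u}} (I : Set (L.Term (α.ToType ⊕ PUnit.{u + 1})))
    (phis : α.ToType → L.Term Var) (ψ : L.Term Var) : Set (L.Term Var) :=
  (fun t => t.subst (Sum.elim phis (fun _ => ψ))) '' I

/-- `I(φ̄, ψ, π̄)`: instantiation of a parametrized DDT set of formulas. -/
def pdInst {α : Ordinal.{u}} (I : Set (L.Term (α.ToType ⊕ (PUnit.{u + 1} ⊕ Var))))
    (phis : α.ToType → L.Term Var) (ψ : L.Term Var) (pis : Var → L.Term Var) :
    Set (L.Term Var) :=
  (fun t => t.subst (Sum.elim phis (Sum.elim (fun _ => ψ) pis))) '' I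

variable (Lg : Logic L Var)

/-- The κ-ary local deduction--detachment theorem w.r.t. `Φ`. -/
def LocalDDT (κ : Cardinal.{u}) (Φ : LFamD L Var) : Prop :=
  ∀ α : Ordinal.{u}, 0 < α → α < κ.ord →
    ∀ (Γ : Set (L.Term Var)) (phis : α.ToType → L.Term Var) (ψ : L.Term Var),
      Lg.Deriv (Γ ∪ range phis) ψ ↔ ∃ I ∈ Φ α, Lg.DerivAll Γ (dInst I phis ψ)

/-- The κ-ary global deduction--detachment theorem w.r.t. `Φ`. -/
def GlobalDDT (κ : Cardinal.{u}) (Φ : GFamD L Var) : Prop :=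
  Lg.LocalDDT κ (fun α => {Φ α})

/-- The κ-ary parametrized local deduction--detachment theorem w.r.t. `Φ`. -/
def ParamLocalDDT (κ : Cardinal.{u}) (Φ : PFamD L Var) : Prop :=
  ∀ α : Ordinal.{u}, 0 < α → α < κ.ord →
    ∀ (Γ : Set (L.Term Var)) (phis : α.ToType → L.Term Var) (ψ : L.Term Var),
      Lg.Deriv (Γ ∪ range phis) ψ ↔
        ∃ I ∈ Φ α, ∃ pis : Var → L.Term Var, Lg.DerivAll Γ (pdInst I phis ψ pis)

/-- A protoimplication set: a set `Δ(p, q)` of formulas in two variables with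
`∅ ⊢ Δ(p, p)` and `p, Δ(p, q) ⊢ q` (stated via all instances, by structurality). -/
def HasProtoimplication : Prop :=
  ∃ Δ : Set (L.Term (ULift.{u} Bool)),
    (∀ φ : L.Term Var,
      Lg.DerivAll ∅ ((fun t => t.subst (fun _ => φ)) '' Δ)) ∧
    (∀ φ ψ : L.Term Var,
      Lg.Deriv (insert φ ((fun t => t.subst (fun b => if b.down then ψ else φ)) '' Δ)) ψ)

/-- A rule `Γ ⊢ φ̄` is antiadmissible: substitution instances preserve
inconsistency in every context. -/
def Antiadmissible {ι : Type u} (Γ : Set (L.Term Var)) (phis : ι → L.Term Var) : Prop :=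
  ∀ (σ : Var → L.Term Var) (Δ : Set (L.Term Var)),
    Lg.Inc (range (fun i => (phis i).subst σ) ∪ Δ) →
    Lg.Inc ((fun t => t.subst σ) '' Γ ∪ Δ)

/-- The semisimple companion of a logic: the logic determined by the
simple theories of `Lg`. -/
def companion (Lg : Logic L Var) : Logic L Var where
  Deriv Γ φ := ∀ T : Set (L.Term Var), Lg.IsSimple T →
    ∀ σ : Var → L.Term Var, (fun t => t.subst σ) '' Γ ⊆ T → φ.subst σ ∈ T
  deriv_refl := by
    intro φ T _ σ h
    exact h ⟨φ, rfl, rfl⟩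
  deriv_mono := by
    intro Γ Δ φ hΓ hsub T hT σ h
    exact hΓ T hT σ (fun x hx => h ((Set.image_mono hsub) hx))
  deriv_cut := by
    intro Γ Φ φ hΓ hΦ T hT σ h
    refine hΦ T hT σ ?_
    rintro x ⟨ψ, hψ, rfl⟩
    exact hΓ ψ hψ T hT σ h
  deriv_subst := by
    intro Γ φ σ hΓ T hT τ h
    rw [FirstOrder.Language.Term.subst_subst']
    refine hΓ T hT (fun v => (σ v).subst τ) ?_
    rintro x ⟨ψ, hψ, rfl⟩
    show (ψ.subst fun v => (σ v).subst τ) ∈ T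
    rw [← FirstOrder.Language.Term.subst_subst']
    exact h ⟨ψ.subst σ, ⟨ψ, hψ, rfl⟩, rfl⟩

/-- Equivalence of two parametrized IL families, stated through all of their
instances (which, by structurality, is equivalent to the schematic entailments
`I(p̄, q̄) ⊢ I'(p̄, π̄')`). -/
def FamEquiv (Lg : Logic L Var) (κ : Cardinal.{u}) (Ψ Ψ' : PFam L Var) : Prop :=
  (∀ α : Ordinal.{u}, 0 < α → α < κ.ord →
    ∀ I ∈ Ψ α, ∃ I' ∈ Ψ' α, ∃ pis' : Var → L.Term (α.ToType ⊕ Var),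
      ∀ (phis : α.ToType → L.Term Var) (rhos : Var → L.Term Var),
        Lg.DerivAll (pInst I phis rhos)
          (pInst I' phis (fun v => (pis' v).subst (Sum.elim phis rhos)))) ∧
  (∀ α : Ordinal.{u}, 0 < α → α < κ.ord →
    ∀ I' ∈ Ψ' α, ∃ I ∈ Ψ α, ∃ pis : Var → L.Term (α.ToType ⊕ Var),
      ∀ (phis : α.ToType → L.Term Var) (rhos : Var → L.Term Var),
        Lg.DerivAll (pInst I' phis rhos)
          (pInst I phis (fun v => (pis v).subst (Sum.elim phis rhos))))

end Logic


/-!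
If `Γ₀` is an antitheorem, then for every substitution `σ` a set of formulas is inconsistent
as soon as it derives `σ[Γ₀]`: if `Δ` is consistent, the Lindenbaum matrix
`⟨Fm, Cn Δ⟩` is a non-trivial model in which the valuation `σ` designates `Γ₀`. Hence
`Γ ∪ φ̄` is inconsistent iff it derives every `σ(γ)`, `γ ∈ Γ₀`, and the DDT moves `φ̄` to the
right of the turnstile: `Γ ⊢ I(φ̄, σ(γ))`. Taking for `σ` a substitution expressible in the
available variables (`γ(pᵢ, …, pᵢ)` without parameters, `γ` itself with parameters), the union
of these sets over `γ ∈ Γ₀` is the inconsistency-lemma set.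
-/

namespace FirstOrder.Language.Term

variable {L : Language} {α β γ : Type*}

theorem subst_var_eq_self (t : L.Term α) : t.subst var = t := by
  induction t with
  | var => rfl
  | func f ts ih => simp only [subst, ih]

theorem relabel_subst (t : L.Term α) (f : α → β) (g : β → L.Term γ) :
    (t.relabel f).subst g = t.subst (g ∘ f) := by
  induction t with
  | var => rfl
  | func f ts ih => simp only [relabel, subst, ih]

@[reducible]
def termStructure (L : Language) (α : Type*) : L.Structure (L.Term α) where
  funMap f ts := func f ts
  RelMap _ _ := False

theorem realize_termStructure (v : α → L.Term β) (t : L.Term α) :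
    @realize L _ (termStructure L β) α v t = t.subst v := by
  induction t with
  | var => rfl
  | func f ts ih => exact congrArg (func f) (funext ih)

end FirstOrder.Language.Term

namespace Logic

open FirstOrder.Language.Term

variable {L : FirstOrder.Language.{u, u}} {Var : Type u} (Lg : Logic L Var)

attribute [local instance] termStructure

theorem derivAll_iff_subset (Γ Δ : Set (L.Term Var)) :
    Lg.DerivAll Γ Δ ↔ Δ ⊆ {φ | Lg.Deriv Γ φ} :=
  Iff.rfl

theorem isModel_termStructure_derivClosure (Δ : Set (L.Term Var)) :
    Lg.IsModel (L.Term Var) {φ | Lg.Deriv Δ φ} := by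
  intro σ φ hφ
  show Lg.Deriv Δ (realize σ φ)
  simp only [realize_termStructure] at hφ ⊢
  refine Lg.deriv_cut ?_ (Lg.deriv_subst σ hφ)
  rintro _ ⟨ψ, hψ, rfl⟩
  exact hψ

theorem inc_iff_derivAll_image_subst {Γ₀ : Set (L.Term Var)} (hΓ₀ : Lg.Antitheorem Γ₀)
    (σ : Var → L.Term Var) (Δ : Set (L.Term Var)) :
    Lg.Inc Δ ↔ Lg.DerivAll Δ ((fun t => t.subst σ) '' Γ₀) := by
  refine ⟨fun hinc φ _ => hinc φ, fun hder => by_contra fun hcons => ?_⟩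
  have hne : {φ | Lg.Deriv Δ φ} ≠ univ := fun h => hcons fun φ => (h.symm ▸ mem_univ φ :)
  refine hΓ₀ (L.Term Var) _ (Lg.isModel_termStructure_derivClosure Δ) hne σ ?_
  rintro _ ⟨γ, hγ, rfl⟩
  show Lg.Deriv Δ (realize σ γ)
  rw [realize_termStructure]
  exact hder _ ⟨γ, hγ, rfl⟩

/-- The parameter-free IL set `⋃_{γ ∈ Γ₀, i} J γ i (p̄, γ(pᵢ, …, pᵢ))`. Taking the union over
all `i`, rather than fixing one, makes it a single set when the DDT family is global. -/
def localILSet (Γ₀ : Set (L.Term Var)) {α : Ordinal.{u}}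
    (J : L.Term Var → α.ToType → Set (L.Term (α.ToType ⊕ PUnit.{u + 1}))) :
    Set (L.Term α.ToType) :=
  ⋃ γ ∈ Γ₀, ⋃ i, (fun t => t.subst (Sum.elim var fun _ => γ.relabel fun _ => i)) '' J γ i

def localILFam (Γ₀ : Set (L.Term Var)) (Φ : LFamD L Var) : LFam L Var := fun α =>
  {S | ∃ J, (∀ γ ∈ Γ₀, ∀ i, J γ i ∈ Φ α) ∧ S = localILSet Γ₀ J}

def globalILFam (Γ₀ : Set (L.Term Var)) (Φ : GFamD L Var) : GFam L Var := fun α =>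
  localILSet Γ₀ fun _ _ => Φ α

/-- The parametrized IL set `⋃_{γ ∈ Γ₀} J γ (p̄, γ, g γ)`: the variables of `γ` become the
parameters, while the DDT parameters `g γ` are fixed formulas, part of the set. -/
def paramILSet (Γ₀ : Set (L.Term Var)) {α : Ordinal.{u}}
    (J : L.Term Var → Set (L.Term (α.ToType ⊕ (PUnit.{u + 1} ⊕ Var))))
    (g : L.Term Var → Var → L.Term Var) : Set (L.Term (α.ToType ⊕ Var)) :=
  ⋃ γ ∈ Γ₀, (fun t => t.subst (Sum.elim (var ∘ Sum.inl)
    fun x => (Sum.elim (fun _ => γ) (g γ) x).relabel Sum.inr)) '' J γ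

def paramILFam (Γ₀ : Set (L.Term Var)) (Φ : PFamD L Var) : PFam L Var := fun α =>
  {S | ∃ J g, (∀ γ ∈ Γ₀, J γ ∈ Φ α) ∧ S = paramILSet Γ₀ J g}

variable {Γ₀ : Set (L.Term Var)} {α : Ordinal.{u}}

theorem lInst_localILSet (J : L.Term Var → α.ToType → Set (L.Term (α.ToType ⊕ PUnit.{u + 1})))
    (φs : α.ToType → L.Term Var) :
    lInst (localILSet Γ₀ J) φs = ⋃ γ ∈ Γ₀, ⋃ i, dInst (J γ i) φs (γ.subst fun _ => φs i) := by
  simp only [lInst, localILSet, dInst, image_iUnion, image_image, subst_subst']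
  refine iUnion₂_congr fun γ _ => iUnion_congr fun i => image_congr' fun t => congrArg t.subst ?_
  funext x
  rcases x with j | _
  · rfl
  · exact relabel_subst γ _ φs

theorem pInst_paramILSet (J : L.Term Var → Set (L.Term (α.ToType ⊕ (PUnit.{u + 1} ⊕ Var))))
    (g : L.Term Var → Var → L.Term Var) (φs : α.ToType → L.Term Var) (πs : Var → L.Term Var) :
    pInst (paramILSet Γ₀ J g) φs πs =
      ⋃ γ ∈ Γ₀, pdInst (J γ) φs (γ.subst πs) fun v => (g γ v).subst πs := by
  simp only [pInst, paramILSet, pdInst, image_iUnion, image_image, subst_subst']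
  refine iUnion₂_congr fun γ _ => image_congr' fun t => congrArg t.subst ?_
  funext x
  rcases x with j | _ | v
  · rfl
  · exact relabel_subst γ _ _
  · exact relabel_subst (g γ v) _ _

theorem localILFam_singleton (Φ : GFamD L Var) :
    localILFam Γ₀ (fun α => {Φ α}) = fun α => {globalILFam Γ₀ Φ α} := by
  funext α
  ext S
  simp only [localILFam, globalILFam, mem_singleton_iff]
  constructor
  · rintro ⟨J, hJ, rfl⟩
    exact iUnion₂_congr fun γ hγ => iUnion_congr fun i => by rw [hJ γ hγ i]
  · rintro rfl
    exact ⟨fun _ _ => Φ α, fun _ _ _ => rfl, rfl⟩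

theorem localIL_of_localDDT {κ : Cardinal.{u}} {Φ : LFamD L Var} (hΦ : Lg.LocalDDT κ Φ)
    (hΓ₀ : Lg.Antitheorem Γ₀) : Lg.LocalIL κ (localILFam Γ₀ Φ) := by
  intro α hα hακ Γ φs
  have hDDT (γ : L.Term Var) i := hΦ α hα hακ Γ φs (γ.subst fun _ => φs i)
  obtain ⟨i₀⟩ : Nonempty α.ToType := Ordinal.nonempty_toType_iff.2 hα.ne'
  constructor
  · intro hinc
    choose! J hJΦ hJ using fun γ (_ : γ ∈ Γ₀) i => (hDDT γ i).1 (hinc _)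
    refine ⟨_, ⟨J, hJΦ, rfl⟩, ?_⟩
    simpa only [lInst_localILSet, derivAll_iff_subset, iUnion_subset_iff] using hJ
  · rintro ⟨_, ⟨J, hJΦ, rfl⟩, hJ⟩
    simp only [lInst_localILSet, derivAll_iff_subset, iUnion_subset_iff] at hJ
    rw [Lg.inc_iff_derivAll_image_subst hΓ₀ fun _ => φs i₀]
    rintro _ ⟨γ, hγ, rfl⟩
    exact (hDDT γ i₀).2 ⟨J γ i₀, hJΦ γ hγ i₀, hJ γ hγ i₀⟩

theorem globalIL_of_globalDDT {κ : Cardinal.{u}} {Φ : GFamD L Var} (hΦ : Lg.GlobalDDT κ Φ)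
    (hΓ₀ : Lg.Antitheorem Γ₀) : Lg.GlobalIL κ (globalILFam Γ₀ Φ) := by
  rw [GlobalIL, ← localILFam_singleton]
  exact Lg.localIL_of_localDDT hΦ hΓ₀

theorem paramLocalIL_of_paramLocalDDT {κ : Cardinal.{u}} {Φ : PFamD L Var}
    (hΦ : Lg.ParamLocalDDT κ Φ) (hΓ₀ : Lg.Antitheorem Γ₀) :
    Lg.ParamLocalIL κ (paramILFam Γ₀ Φ) := by
  intro α hα hακ Γ φs
  have hDDT (γ : L.Term Var) := hΦ α hα hακ Γ φs γ
  constructor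
  · intro hinc
    choose! J hJΦ g hJ using fun γ (_ : γ ∈ Γ₀) => (hDDT γ).1 (hinc γ)
    refine ⟨_, ⟨J, g, hJΦ, rfl⟩, var, ?_⟩
    simpa only [pInst_paramILSet, subst_var_eq_self, derivAll_iff_subset, iUnion_subset_iff]
      using hJ
  · rintro ⟨_, ⟨J, g, hJΦ, rfl⟩, πs, hJ⟩
    simp only [pInst_paramILSet, derivAll_iff_subset, iUnion_subset_iff] at hJ
    rw [Lg.inc_iff_derivAll_image_subst hΓ₀ πs]
    rintro _ ⟨γ, hγ, rfl⟩
    exact (hDDT _).2 ⟨J γ, hJΦ γ hγ, _, hJ γ hγ⟩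

end Logic

theorem statement_3_general {L : FirstOrder.Language.{u, u}} {Var : Type u} (Lg : Logic L Var) (κ : Cardinal.{u}) :
    ((∃ Φ : GFamD L Var, Lg.GlobalDDT κ Φ) → (∃ Γ, Lg.Antitheorem Γ) →
      ∃ Ψ : GFam L Var, Lg.GlobalIL κ Ψ) ∧
    ((∃ Φ : LFamD L Var, Lg.LocalDDT κ Φ) → (∃ Γ, Lg.Antitheorem Γ) →
      ∃ Ψ : LFam L Var, Lg.LocalIL κ Ψ) ∧
    ((∃ Φ : PFamD L Var, Lg.ParamLocalDDT κ Φ) →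
      (∃ Γ : Set (L.Term Var), Lg.Antitheorem Γ ∧ Cardinal.mk ↥Γ ≤ Cardinal.mk Var) →
      ∃ Ψ : PFam L Var, Lg.ParamLocalIL κ Ψ) :=
  ⟨fun ⟨_, hΦ⟩ ⟨_, hΓ₀⟩ => ⟨_, Lg.globalIL_of_globalDDT hΦ hΓ₀⟩,
   fun ⟨_, hΦ⟩ ⟨_, hΓ₀⟩ => ⟨_, Lg.localIL_of_localDDT hΦ hΓ₀⟩,
   fun ⟨_, hΦ⟩ ⟨_, hΓ₀, _⟩ => ⟨_, Lg.paramLocalIL_of_paramLocalDDT hΦ hΓ₀⟩⟩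

/-- a κ-ary global (local, parametrized local) DDT together with an
antitheorem (of cardinality at most `|Var|` in the parametrized local case)
yields the κ-ary global (local, parametrized local) IL. -/
theorem statement_3 {L : FirstOrder.Language.{u, u}} {Var : Type u} (Lg : Logic L Var) (κ : Cardinal.{u})
    (hκ1 : 1 < κ) (hκ2 : κ ≤ Order.succ (Cardinal.mk Var)) :
    ((∃ Φ : GFamD L Var, Lg.GlobalDDT κ Φ) → (∃ Γ, Lg.Antitheorem Γ) →
      ∃ Ψ : GFam L Var, Lg.GlobalIL κ Ψ) ∧
    ((∃ Φ : LFamD L Var, Lg.LocalDDT κ Φ) → (∃ Γ, Lg.Antitheorem Γ) →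
      ∃ Ψ : LFam L Var, Lg.LocalIL κ Ψ) ∧
    ((∃ Φ : PFamD L Var, Lg.ParamLocalDDT κ Φ) →
      (∃ Γ : Set (L.Term Var), Lg.Antitheorem Γ ∧ Cardinal.mk ↥Γ ≤ Cardinal.mk Var) →
      ∃ Ψ : PFam L Var, Lg.ParamLocalIL κ Ψ) :=
  statement_3_general Lg κ
end

section
/- Let κ be a regular infinite cardinal. If a κ-compact logic L enjoys the dual local inconsistency lemma with respect to a family Ψ such that |Ψ₁| < κ, then L is a κ-ary logic, i.e., Γ ⊢_L φ implies Γ' ⊢_L φ for some Γ' ⊆ Γ with |Γ'| < κ. -/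
set_option linter.unusedVariables false

open FirstOrder Set

universe u

/-! By the dual inconsistency lemma for `α = 1`, `Γ ⊢ φ` holds exactly when `Γ ∪ I(φ)` is
inconsistent for every `I ∈ Ψ₁`. Compactness shrinks each of these to `Γ_I ∪ I(φ)` with
`Γ_I ⊆ Γ` of size `< κ`; as `|Ψ₁| < κ` and `κ` is regular, `⋃ Γ_I` still has size `< κ`, and it
derives `φ` by the dual inconsistency lemma read backwards. -/

namespace Logic

variable {L : FirstOrder.Language.{u, u}} {Var : Type u} {Lg : Logic L Var}

theorem Inc.mono {Γ Δ : Set (L.Term Var)} (hΓ : Lg.Inc Γ) (hΓΔ : Γ ⊆ Δ) : Lg.Inc Δ :=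
  fun φ => Lg.deriv_mono (hΓ φ) hΓΔ

theorem Compact.exists_subset_inc_union {κ : Cardinal.{u}} (hcomp : Lg.Compact κ)
    {Γ S : Set (L.Term Var)} (hinc : Lg.Inc (Γ ∪ S)) :
    ∃ Γ' ⊆ Γ, Cardinal.mk Γ' < κ ∧ Lg.Inc (Γ' ∪ S) := by
  obtain ⟨Δ, hΔ, hΔcard, hΔinc⟩ := hcomp _ hinc
  refine ⟨Δ ∩ Γ, inter_subset_right,
    (Cardinal.mk_le_mk_of_subset inter_subset_left).trans_lt hΔcard, hΔinc.mono fun x hx => ?_⟩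
  rcases hΔ hx with hxΓ | hxS
  · exact Or.inl ⟨hx, hxΓ⟩
  · exact Or.inr hxS

theorem DualLocalIL.deriv_iff {κ : Cardinal.{u}} {Ψ : LFam L Var} (h : Lg.DualLocalIL κ Ψ)
    (hκ : 1 < κ) (Γ : Set (L.Term Var)) (φ : L.Term Var) :
    Lg.Deriv Γ φ ↔ ∀ I ∈ Ψ 1, Lg.Inc (Γ ∪ lInst I fun _ => φ) := by
  have : Nonempty (1 : Ordinal.{u}).ToType := Ordinal.nonempty_toType_iff.mpr one_ne_zero
  rw [← h 1 zero_lt_one (Cardinal.lt_ord.mpr (by simpa using hκ)), forall_const]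

end Logic

/-- a κ-compact logic with the dual local IL w.r.t. `Ψ` such that
`|Ψ₁| < κ` is κ-ary, for `κ` a regular infinite cardinal. -/
theorem statement_5 {L : FirstOrder.Language.{u, u}} {Var : Type u} (Lg : Logic L Var) (κ : Cardinal.{u})
    (hreg : κ.IsRegular) (hcomp : Lg.Compact κ)
    (Ψ : LFam L Var) (h : Lg.DualLocalIL 2 Ψ)
    (hcard : Cardinal.mk ↥(Ψ 1) < κ) :
    Lg.Ary κ := by
  intro Γ φ hΓφ
  have hIL := h.deriv_iff Cardinal.one_lt_two
  choose Γ' hΓ'Γ hΓ'card hΓ'inc using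
    fun I hI => hcomp.exists_subset_inc_union ((hIL Γ φ).mp hΓφ I hI)
  refine ⟨⋃ I ∈ Ψ 1, Γ' I ‹_›, iUnion₂_subset hΓ'Γ,
    (Cardinal.card_biUnion_lt_iff_forall_of_isRegular hreg hcard).mpr hΓ'card, ?_⟩
  exact (hIL _ φ).mpr fun I hI => (hΓ'inc I hI).mono <|
    union_subset_union_left _ (subset_iUnion₂ (s := fun I hI => Γ' I hI) I hI)
end

section
/- Let L be a logic which enjoys the κ-ary parametrized local IL with respect to a family Ψ. If L enjoys the dual parametrized local IL with respect to some family, then L enjoys the κ-ary dual parametrized local IL with respect to Ψ itself, and hence the κ-ary classical parametrized local IL with respect to Ψ. -/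
set_option linter.unusedVariables false

open FirstOrder Set

universe u

/-!
Half of the dual inconsistency lemma follows from the ordinary one alone: if `Γ ⊢ φ̄`, then
`Γ ∪ I(φ̄, π̄) ∪ φ̄` is inconsistent by the inconsistency lemma, and the premises `φ̄` can be cut.

For the converse, any dual inconsistency lemma, even a unary one for another family, makes a
formula `φ` derivable from `Γ` as soon as `Γ ∪ Δ` is inconsistent for every `Δ` inconsistent
with `φ` (take `Δ = I'(φ, π̄')`). If `Γ ∪ I(φ̄, π̄)` is inconsistent for all `I ∈ Ψ` and `π̄`, and
`Δ ∪ {φᵢ}` is inconsistent, then so is `Γ ∪ Δ ∪ φ̄`; the inconsistency lemma for `Ψ` yields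
`Γ ∪ Δ ⊢ I(φ̄, π̄)` for some `I` and `π̄`, hence `Γ ∪ Δ` is inconsistent.
-/

namespace Logic

variable {L : FirstOrder.Language.{u, u}} {Var : Type u} {Lg : Logic L Var}
  {Γ Δ Φ : Set (L.Term Var)}

theorem deriv_of_mem {φ : L.Term Var} (h : φ ∈ Γ) : Lg.Deriv Γ φ :=
  Lg.deriv_mono (Lg.deriv_refl φ) (singleton_subset_iff.mpr h)

theorem derivAll_of_subset (h : Δ ⊆ Γ) : Lg.DerivAll Γ Δ :=
  fun _ hφ => deriv_of_mem (h hφ)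

theorem DerivAll.union {Φ' : Set (L.Term Var)} (h : Lg.DerivAll Γ Φ) (h' : Lg.DerivAll Γ Φ') :
    Lg.DerivAll Γ (Φ ∪ Φ') := by
  rintro φ (hφ | hφ)
  exacts [h φ hφ, h' φ hφ]

theorem Inc.mono_s6 (h : Lg.Inc Γ) (hΓΔ : Γ ⊆ Δ) : Lg.Inc Δ :=
  fun φ => Lg.deriv_mono (h φ) hΓΔ

theorem Inc.of_derivAll (h : Lg.Inc Φ) (hΦ : Lg.DerivAll Γ Φ) : Lg.Inc Γ :=
  fun φ => Lg.deriv_cut hΦ (h φ)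

theorem Inc.of_union_derivAll (h : Lg.Inc (Γ ∪ Φ)) (hΦ : Lg.DerivAll Γ Φ) : Lg.Inc Γ :=
  h.of_derivAll ((derivAll_of_subset subset_rfl).union hΦ)

theorem DualParamLocalIL.deriv_of_forall_inc {Ψ' : PFam L Var} (hdual : Lg.DualParamLocalIL 2 Ψ')
    {φ : L.Term Var} (h : ∀ Δ, Lg.Inc (Δ ∪ {φ}) → Lg.Inc (Γ ∪ Δ)) : Lg.Deriv Γ φ := by
  have h1 : (1 : Ordinal.{u}) < (2 : Cardinal.{u}).ord := by
    rw [Cardinal.lt_ord]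
    simp
  have hdual1 := hdual 1 zero_lt_one h1
  have hφ : ∀ I' ∈ Ψ' 1, ∀ pis, Lg.Inc ({φ} ∪ pInst I' (fun _ => φ) pis) :=
    (hdual1 {φ} fun _ => φ).mp fun _ => Lg.deriv_refl φ
  refine (hdual1 Γ fun _ => φ).mpr (fun I' hI' pis => h _ ?_) default
  exact (hφ I' hI' pis).mono_s6 (union_comm _ _).subset

variable {κ : Cardinal.{u}} {Ψ : PFam L Var} {α : Ordinal.{u}}

theorem ParamLocalIL.inc_of_forall_deriv (h : Lg.ParamLocalIL κ Ψ) (hα0 : 0 < α)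
    (hακ : α < κ.ord) {phis : α.ToType → L.Term Var} (hder : ∀ i, Lg.Deriv Γ (phis i))
    {I : Set (L.Term (α.ToType ⊕ Var))} (hI : I ∈ Ψ α) (pis : Var → L.Term Var) :
    Lg.Inc (Γ ∪ pInst I phis pis) := by
  have hinc : Lg.Inc ((Γ ∪ pInst I phis pis) ∪ range phis) :=
    (h α hα0 hακ _ phis).mpr ⟨I, hI, pis, derivAll_of_subset subset_union_right⟩
  refine hinc.of_union_derivAll ?_
  rintro _ ⟨i, rfl⟩
  exact Lg.deriv_mono (hder i) subset_union_left

theorem ParamLocalIL.inc_union_of_inc_union (h : Lg.ParamLocalIL κ Ψ) (hα0 : 0 < α)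
    (hακ : α < κ.ord) {phis : α.ToType → L.Term Var}
    (hinc : ∀ I ∈ Ψ α, ∀ pis, Lg.Inc (Γ ∪ pInst I phis pis)) (i : α.ToType)
    (hΔ : Lg.Inc (Δ ∪ {phis i})) : Lg.Inc (Γ ∪ Δ) := by
  have hΔφ : Lg.Inc ((Γ ∪ Δ) ∪ range phis) :=
    hΔ.mono_s6 (union_subset_union subset_union_right (singleton_subset_iff.mpr ⟨i, rfl⟩))
  obtain ⟨I, hI, pis, hderI⟩ := (h α hα0 hακ _ phis).mp hΔφ
  exact (hinc I hI pis).of_derivAll ((derivAll_of_subset subset_union_left).union hderI)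

theorem ParamLocalIL.dualParamLocalIL (h : Lg.ParamLocalIL κ Ψ) {Ψ' : PFam L Var}
    (hdual : Lg.DualParamLocalIL 2 Ψ') : Lg.DualParamLocalIL κ Ψ :=
  fun _ hα0 hακ _ _ =>
    ⟨fun hder _ hI pis => h.inc_of_forall_deriv hα0 hακ hder hI pis,
      fun hinc i => hdual.deriv_of_forall_inc fun _ => h.inc_union_of_inc_union hα0 hακ hinc i⟩

end Logic

theorem statement_6_general {L : FirstOrder.Language.{u, u}} {Var : Type u} (Lg : Logic L Var) (κ : Cardinal.{u})
    (Ψ : PFam L Var) (h : Lg.ParamLocalIL κ Ψ)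
    (hdual : ∃ Ψ' : PFam L Var, Lg.DualParamLocalIL 2 Ψ') :
    Lg.DualParamLocalIL κ Ψ ∧ Lg.ClassicalParamLocalIL κ Ψ := by
  obtain ⟨Ψ', hΨ'⟩ := hdual
  have hdualκ : Lg.DualParamLocalIL κ Ψ := h.dualParamLocalIL hΨ'
  exact ⟨hdualκ, h, hdualκ⟩

/-- a κ-ary parametrized local IL w.r.t. `Ψ` together with a dual
parametrized local IL w.r.t. some family yields the κ-ary dual (hence classical)
parametrized local IL w.r.t. `Ψ` itself. -/
theorem statement_6 {L : FirstOrder.Language.{u, u}} {Var : Type u} (Lg : Logic L Var) (κ : Cardinal.{u})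
    (hκ1 : 1 < κ) (hκ2 : κ ≤ Order.succ (Cardinal.mk Var))
    (Ψ : PFam L Var) (h : Lg.ParamLocalIL κ Ψ)
    (hdual : ∃ Ψ' : PFam L Var, Lg.DualParamLocalIL 2 Ψ') :
    Lg.DualParamLocalIL κ Ψ ∧ Lg.ClassicalParamLocalIL κ Ψ :=
  statement_6_general Lg κ Ψ h hdual
end

section
/- Let L be a logic which enjoys the classical (κ+λ)-ary local IL with respect to a family Ψ such that each set in Ψ₁ has cardinality less than λ+1. Then L enjoys the κ-ary local DDT. If moreover the classical IL is global (each Ψ_α a singleton), then L enjoys the κ-ary global DDT. -/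
set_option linter.unusedVariables false

open FirstOrder Set

universe u

/-!
By the dual IL for a single formula, `Γ ∪ φ̄ ⊢ ψ` iff `Γ ∪ φ̄ ∪ J(ψ)` is inconsistent for every
`J ∈ Ψ₁`. Since `|J| ≤ μ`, the tuple `φ̄ ⌢ J(ψ)` has fewer than `κ + μ` entries, so by the IL
each of these inconsistencies amounts to `Γ ⊢ I_J(φ̄, J(ψ))` for some `I_J` in the matching `Ψ`.
Choosing one `I_J` for every `J` yields the DDT set `⋃_J I_J(p̄, J(q))`; when every `Ψ_β` is a
singleton there is only one choice, and the DDT is global.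
-/

open Cardinal

theorem Cardinal.add_lt_add_of_lt_of_lt_add_one {a b κ μ : Cardinal.{u}} (ha : a < κ)
    (hb : b < μ + 1) : a + b < κ + μ := by
  rcases le_or_gt ℵ₀ (κ + μ) with hinf | hfin
  · have hκ : 1 ≤ κ := Cardinal.one_le_iff_pos.mpr (zero_le.trans_lt ha)
    have hμ : μ + 1 ≤ κ + μ := by rw [add_comm κ]; gcongr
    exact add_lt_of_lt hinf (ha.trans_le le_self_add) (hb.trans_le hμ)
  · lift κ to ℕ using le_self_add.trans_lt hfin
    lift μ to ℕ using le_add_self.trans_lt hfin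
    lift a to ℕ using ha.trans natCast_lt_aleph0
    lift b to ℕ using hb.trans (by exact_mod_cast natCast_lt_aleph0 (n := μ + 1))
    norm_cast at ha hb ⊢
    omega

theorem Cardinal.mk_toType_sum_lt_add {κ μ : Cardinal.{u}} {α : Ordinal.{u}} {ι : Type u}
    (hα : α < κ.ord) (hι : #ι < μ + 1) : #(α.ToType ⊕ ι) < κ + μ := by
  simpa [mk_sum] using add_lt_add_of_lt_of_lt_add_one (lt_ord.mp hα) hι

theorem Cardinal.ord_mk_pos (ι : Type u) [Nonempty ι] : 0 < (#ι).ord :=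
  ord_pos.mpr (pos_iff_ne_zero.mpr (mk_ne_zero ι))

namespace Logic

variable {L : FirstOrder.Language.{u, u}} {Var : Type u}

noncomputable def enumOrd (ι : Type u) : (#ι).ord.ToType ≃ ι :=
  Classical.choice (Cardinal.eq.mp (mk_ord_toType _))

def appendInst {ι V : Type u} (phis : ι → L.Term V)
    (J : Set (L.Term (1 : Ordinal.{u}).ToType)) (ψ : L.Term V) : ι ⊕ J → L.Term V :=
  Sum.elim phis fun t => t.1.subst fun _ => ψ

theorem appendInst_subst {ι V W : Type u} (phis : ι → L.Term V)
    (J : Set (L.Term (1 : Ordinal.{u}).ToType)) (ψ : L.Term V) (σ : V → L.Term W)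
    (x : ι ⊕ J) :
    (appendInst phis J ψ x).subst σ = appendInst (fun i => (phis i).subst σ) J (ψ.subst σ) x := by
  rcases x with i | t
  · rfl
  · exact Language.Term.subst_subst' _ _ _

theorem range_appendInst {ι : Type u} (phis : ι → L.Term Var)
    (J : Set (L.Term (1 : Ordinal.{u}).ToType)) (ψ : L.Term Var) :
    range (appendInst phis J ψ) = range phis ∪ lInst J (fun _ => ψ) := by
  rw [appendInst, Sum.elim_range, lInst, image_eq_range]

variable {Lg : Logic L Var}

theorem derivAll_iUnion {ι : Sort*} (Γ : Set (L.Term Var)) (A : ι → Set (L.Term Var)) :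
    Lg.DerivAll Γ (⋃ i, A i) ↔ ∀ i, Lg.DerivAll Γ (A i) := by
  simp only [DerivAll, mem_iUnion, forall_exists_index]
  exact forall_comm

theorem LocalIL.inc_union_range_iff {κ : Cardinal.{u}} {Ψ : LFam L Var} (hIL : Lg.LocalIL κ Ψ)
    {ι : Type u} [Nonempty ι] (hι : #ι < κ) (Γ : Set (L.Term Var)) (phis : ι → L.Term Var) :
    Lg.Inc (Γ ∪ range phis) ↔ ∃ I ∈ Ψ (#ι).ord, Lg.DerivAll Γ (lInst I (phis ∘ enumOrd ι)) := by
  rw [← (enumOrd ι).surjective.range_comp phis]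
  exact hIL _ (ord_mk_pos ι) (ord_lt_ord.mpr hι) Γ _

/-- The tuple `p̄ ⌢ J(q)`, re-indexed by the initial ordinal of its length so that `Ψ` applies. -/
noncomputable def ddtTemplate (α : Ordinal.{u}) (J : Set (L.Term (1 : Ordinal.{u}).ToType)) :
    (#(α.ToType ⊕ J)).ord.ToType → L.Term (α.ToType ⊕ PUnit.{u + 1}) :=
  appendInst (fun a => .var (Sum.inl a)) J (.var (Sum.inr PUnit.unit)) ∘ enumOrd _

theorem dInst_image_subst_ddtTemplate {α : Ordinal.{u}}
    {J : Set (L.Term (1 : Ordinal.{u}).ToType)} (I : Set (L.Term (#(α.ToType ⊕ J)).ord.ToType))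
    (phis : α.ToType → L.Term Var) (ψ : L.Term Var) :
    dInst ((fun t => t.subst (ddtTemplate α J)) '' I) phis ψ =
      lInst I (appendInst phis J ψ ∘ enumOrd _) := by
  simp only [dInst, lInst, image_image, Language.Term.subst_subst']
  congr! with t
  exact appendInst_subst _ J _ _ _

theorem dInst_iUnion {ι : Sort*} {α : Ordinal.{u}}
    (A : ι → Set (L.Term (α.ToType ⊕ PUnit.{u + 1}))) (phis : α.ToType → L.Term Var)
    (ψ : L.Term Var) : dInst (⋃ i, A i) phis ψ = ⋃ i, dInst (A i) phis ψ :=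
  image_iUnion

noncomputable def ddtFamily (Ψ : LFam L Var) : LFamD L Var := fun α =>
  (fun I : (J : Ψ 1) → Set (L.Term (#(α.ToType ⊕ J.1)).ord.ToType) =>
      ⋃ J, (fun t => t.subst (ddtTemplate α J.1)) '' I J) ''
    univ.pi fun J => Ψ (#(α.ToType ⊕ J.1)).ord

theorem ClassicalLocalIL.deriv_union_range_iff {κ μ : Cardinal.{u}} {Ψ : LFam L Var}
    (h : Lg.ClassicalLocalIL (κ + μ) Ψ) (hcard : ∀ I ∈ Ψ 1, #I < μ + 1) {α : Ordinal.{u}}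
    (hα0 : 0 < α) (hα : α < κ.ord) (Γ : Set (L.Term Var)) (phis : α.ToType → L.Term Var)
    (ψ : L.Term Var) :
    Lg.Deriv (Γ ∪ range phis) ψ ↔ ∀ J : Ψ 1, ∃ I ∈ Ψ (#(α.ToType ⊕ J.1)).ord,
      Lg.DerivAll Γ (lInst I (appendInst phis J.1 ψ ∘ enumOrd _)) := by
  have : Nonempty α.ToType := Ordinal.nonempty_toType_iff.mpr hα0.ne'
  have h1 : (1 : Ordinal) < (κ + μ).ord :=
    ((Order.one_le_iff_pos.mpr hα0).trans_lt hα).trans_le (ord_le_ord.mpr le_self_add)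
  have hdual := h.2 1 one_pos h1 (Γ ∪ range phis) fun _ => ψ
  rw [forall_const] at hdual
  rw [hdual, Subtype.forall]
  refine forall₂_congr fun J hJ => ?_
  rw [union_assoc, ← range_appendInst]
  exact h.1.inc_union_range_iff (mk_toType_sum_lt_add hα (hcard J hJ)) Γ _

theorem ClassicalLocalIL.localDDT {κ μ : Cardinal.{u}} {Ψ : LFam L Var}
    (h : Lg.ClassicalLocalIL (κ + μ) Ψ) (hcard : ∀ I ∈ Ψ 1, #I < μ + 1) :
    Lg.LocalDDT κ (ddtFamily Ψ) := by
  intro α hα0 hα Γ phis ψ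
  rw [h.deriv_union_range_iff hcard hα0 hα]
  simp only [ddtFamily, exists_mem_image, mem_univ_pi, dInst_iUnion, derivAll_iUnion,
    dInst_image_subst_ddtTemplate, ← forall_and]
  exact Classical.skolem

theorem LocalDDT.globalDDT_sUnion {κ : Cardinal.{u}} {Φ : LFamD L Var} (hΦ : Lg.LocalDDT κ Φ)
    (hsing : ∀ α : Ordinal.{u}, 0 < α → α < κ.ord → ∃ S, Φ α = {S}) :
    Lg.GlobalDDT κ fun α => ⋃₀ Φ α := by
  intro α hα0 hα
  obtain ⟨S, hS⟩ := hsing α hα0 hα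
  simpa only [hS, sUnion_singleton] using hΦ α hα0 hα

theorem exists_ddtFamily_eq_singleton {κ μ : Cardinal.{u}} {Ψ : LFam L Var}
    (hcard : ∀ I ∈ Ψ 1, #I < μ + 1)
    (hsing : ∀ β : Ordinal.{u}, 0 < β → β < (κ + μ).ord → ∃ I, Ψ β = {I}) {α : Ordinal.{u}}
    (hα0 : 0 < α) (hα : α < κ.ord) : ∃ S, ddtFamily Ψ α = {S} := by
  have : Nonempty α.ToType := Ordinal.nonempty_toType_iff.mpr hα0.ne'
  choose I hI using fun J : Ψ 1 =>
    hsing _ (ord_mk_pos _) (ord_lt_ord.mpr (mk_toType_sum_lt_add hα (hcard J.1 J.2)))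
  simp only [ddtFamily, hI, univ_pi_singleton, image_singleton, singleton_eq_singleton_iff,
    exists_eq']

end Logic

theorem statement_7_general {L : FirstOrder.Language.{u, u}} {Var : Type u} (Lg : Logic L Var) (κ μ : Cardinal.{u})
    (Ψ : LFam L Var) (h : Lg.ClassicalLocalIL (κ + μ) Ψ)
    (hcard : ∀ I ∈ Ψ 1, Cardinal.mk ↥I < μ + 1) :
    (∃ Φ : LFamD L Var, Lg.LocalDDT κ Φ) ∧
    ((∀ α : Ordinal.{u}, 0 < α → α < (κ + μ).ord → ∃ I, Ψ α = {I}) →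
      ∃ Φ : GFamD L Var, Lg.GlobalDDT κ Φ) :=
  have hDDT := h.localDDT hcard
  ⟨⟨_, hDDT⟩, fun hsing => ⟨_, hDDT.globalDDT_sUnion fun _ hα0 hα =>
    Logic.exists_ddtFamily_eq_singleton hcard hsing hα0 hα⟩⟩

/-- the classical (κ+λ)-ary local IL w.r.t. `Ψ`, with each set in
`Ψ₁` of cardinality less than `λ+1`, yields the κ-ary local DDT; if the IL is
moreover global, it yields the κ-ary global DDT. -/
theorem statement_7 {L : FirstOrder.Language.{u, u}} {Var : Type u} (Lg : Logic L Var) (κ μ : Cardinal.{u})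
    (hκ1 : 1 < κ + μ) (hκ2 : κ + μ ≤ Order.succ (Cardinal.mk Var))
    (Ψ : LFam L Var) (h : Lg.ClassicalLocalIL (κ + μ) Ψ)
    (hcard : ∀ I ∈ Ψ 1, Cardinal.mk ↥I < μ + 1) :
    (∃ Φ : LFamD L Var, Lg.LocalDDT κ Φ) ∧
    ((∀ α : Ordinal.{u}, 0 < α → α < (κ + μ).ord → ∃ I, Ψ α = {I}) →
      ∃ Φ : GFamD L Var, Lg.GlobalDDT κ Φ) :=
  statement_7_general Lg κ μ Ψ h hcard
end
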